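/- arXiv:1507.02521 — 4 statements merged into one kernel-verified Lean document; each statement's English description precedes it below -/
import Mathlib

section
/- The hard-sphere partition function grows when the domain absorbs part of the boundary condition: for every finite set C ⊆ ℝ^d, all bounded Borel sets A ⊆ B ⊆ ℝ^d, every activity λ ≥ 0 and radius R ≥ 0, one has Z(A, C \ A, λ) ≤ Z(B, C \ B, λ). -/
open MeasureTheory
open scoped Classical

/-- Hard-core indicator of a tuple `x = (x 0, …, x (n-1))` of points of `ℝ^d`
under boundary condition `C`: equals `1` iff `dist (x i) (x j) > R` for all `i < j`
and `dist (x i) c > R` for all `i` and all `c ∈ C`. -/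
noncomputable def hsInd (d : ℕ) (R : ℝ) (C : Finset (EuclideanSpace ℝ (Fin d)))
    {n : ℕ} (x : Fin n → EuclideanSpace ℝ (Fin d)) : ℝ :=
  if (∀ i j : Fin n, i < j → R < dist (x i) (x j)) ∧
      (∀ i : Fin n, ∀ c ∈ C, R < dist (x i) c)
    then 1 else 0

/-- The hard-sphere partition function
`Z(B,C,λ) = Σ_{n≥0} (λ^n/n!) ∫_{B^n} h_n(x|C) dx`. -/
noncomputable def partFun (d : ℕ) (R lam : ℝ)
    (B : Set (EuclideanSpace ℝ (Fin d)))
    (C : Finset (EuclideanSpace ℝ (Fin d))) : ℝ :=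
  ∑' n : ℕ, (lam ^ n / n.factorial) *
    ∫ x in Set.univ.pi (fun _ : Fin n => B), hsInd d R C x

/-!
Passing from `C \ A` to the smaller boundary condition `C \ B` removes constraints, so the
hard-core indicator can only grow, and passing from `Aⁿ` to `Bⁿ` integrates a nonnegative
function over a larger set. So the series for `Z(A, C \ A, λ)` is termwise at most the one for
`Z(B, C \ B, λ)`, and both converge since the `n`-th term is at most `(|λ| |B|)ⁿ / n!`.
-/

section HardCore

variable {d : ℕ} {R : ℝ} {n : ℕ}

lemma measurable_hsInd (C : Finset (EuclideanSpace ℝ (Fin d))) :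
    Measurable (hsInd d R C : (Fin n → EuclideanSpace ℝ (Fin d)) → ℝ) := by
  refine Measurable.ite ?_ measurable_const measurable_const
  simp only [Set.ofPred_and, Set.ofPred_forall]
  refine .inter
    (.iInter fun i => .iInter fun j => .iInter fun _ => measurableSet_lt measurable_const ?_)
    (.iInter fun i => .biInter C.countable_toSet fun c _ => measurableSet_lt measurable_const ?_)
  · exact ((continuous_apply i).dist (continuous_apply j)).measurable
  · exact ((continuous_apply i).dist continuous_const).measurable

lemma hsInd_nonneg (C : Finset (EuclideanSpace ℝ (Fin d))) (x : Fin n → EuclideanSpace ℝ (Fin d)) :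
    0 ≤ hsInd d R C x := by
  unfold hsInd; split_ifs <;> norm_num

lemma hsInd_le_one (C : Finset (EuclideanSpace ℝ (Fin d))) (x : Fin n → EuclideanSpace ℝ (Fin d)) :
    hsInd d R C x ≤ 1 := by
  unfold hsInd; split_ifs <;> norm_num

lemma hsInd_anti {C C' : Finset (EuclideanSpace ℝ (Fin d))} (h : C' ⊆ C)
    (x : Fin n → EuclideanSpace ℝ (Fin d)) : hsInd d R C x ≤ hsInd d R C' x := by
  unfold hsInd
  split_ifs with hC hC'
  · rfl
  · exact absurd ⟨hC.1, fun i c hc => hC.2 i c (h hc)⟩ hC'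
  · norm_num
  · rfl

lemma integrableOn_hsInd (C : Finset (EuclideanSpace ℝ (Fin d)))
    {s : Set (Fin n → EuclideanSpace ℝ (Fin d))} (hs : volume s ≠ ⊤) :
    IntegrableOn (hsInd d R C) s :=
  (integrableOn_const (C := (1 : ℝ)) hs).mono' (measurable_hsInd C).aestronglyMeasurable
    (.of_forall fun x => by
      simpa [abs_of_nonneg (hsInd_nonneg C x)] using hsInd_le_one C x)

lemma volume_pi_ne_top {B : Set (EuclideanSpace ℝ (Fin d))} (hB : Bornology.IsBounded B) :
    volume (Set.univ.pi fun _ : Fin n => B) ≠ ⊤ := by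
  simpa [volume_pi_pi] using ENNReal.pow_ne_top hB.measure_lt_top.ne

lemma norm_setIntegral_hsInd_le {B : Set (EuclideanSpace ℝ (Fin d))} (hB : Bornology.IsBounded B)
    (C : Finset (EuclideanSpace ℝ (Fin d))) :
    ‖∫ x in Set.univ.pi (fun _ : Fin n => B), hsInd d R C x‖ ≤ volume.real B ^ n := by
  refine (norm_setIntegral_le_of_norm_le_const (C := 1) (volume_pi_ne_top hB).lt_top
    fun x _ => ?_).trans_eq ?_
  · simpa [abs_of_nonneg (hsInd_nonneg C x)] using hsInd_le_one C x
  · simp [measureReal_def, volume_pi_pi, ENNReal.toReal_pow]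

lemma setIntegral_hsInd_mono {A B : Set (EuclideanSpace ℝ (Fin d))} (hAB : A ⊆ B)
    (hB : Bornology.IsBounded B) {C C' : Finset (EuclideanSpace ℝ (Fin d))} (hC : C' ⊆ C) :
    ∫ x in Set.univ.pi (fun _ : Fin n => A), hsInd d R C x ≤
      ∫ x in Set.univ.pi (fun _ : Fin n => B), hsInd d R C' x :=
  calc ∫ x in Set.univ.pi (fun _ : Fin n => A), hsInd d R C x
      ≤ ∫ x in Set.univ.pi (fun _ : Fin n => A), hsInd d R C' x :=
        integral_mono (integrableOn_hsInd C (volume_pi_ne_top (hB.subset hAB)))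
          (integrableOn_hsInd C' (volume_pi_ne_top (hB.subset hAB))) (hsInd_anti hC)
    _ ≤ ∫ x in Set.univ.pi (fun _ : Fin n => B), hsInd d R C' x :=
        setIntegral_mono_set (integrableOn_hsInd C' (volume_pi_ne_top hB))
          (.of_forall (hsInd_nonneg C'))
          (Set.pi_mono fun _ _ => hAB).eventuallyLE

lemma summable_partFun {lam : ℝ} {B : Set (EuclideanSpace ℝ (Fin d))}
    (hB : Bornology.IsBounded B) (C : Finset (EuclideanSpace ℝ (Fin d))) :
    Summable fun n : ℕ => (lam ^ n / n.factorial) *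
      ∫ x in Set.univ.pi (fun _ : Fin n => B), hsInd d R C x := by
  refine (Real.summable_pow_div_factorial (|lam| * volume.real B)).of_norm_bounded fun n => ?_
  rw [norm_mul, mul_pow, mul_div_right_comm]
  gcongr
  · simp
  · exact norm_setIntegral_hsInd_le hB C

lemma partFun_le_partFun {lam : ℝ} (hlam : 0 ≤ lam)
    {A B : Set (EuclideanSpace ℝ (Fin d))} (hAB : A ⊆ B) (hB : Bornology.IsBounded B)
    {C C' : Finset (EuclideanSpace ℝ (Fin d))} (hC : C' ⊆ C) :
    partFun d R lam A C ≤ partFun d R lam B C' :=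
  (summable_partFun (hB.subset hAB) C).tsum_le_tsum
    (fun _ => mul_le_mul_of_nonneg_left (setIntegral_hsInd_mono hAB hB hC) (by positivity))
    (summable_partFun hB C')

end HardCore

theorem partFun_mono_domain_general (d : ℕ) (R lam : ℝ) (hlam : 0 ≤ lam)
    (A B : Set (EuclideanSpace ℝ (Fin d)))
    (hBb : Bornology.IsBounded B) (hAB : A ⊆ B)
    (C : Finset (EuclideanSpace ℝ (Fin d))) :
    partFun d R lam A (C.filter fun c => c ∉ A) ≤
      partFun d R lam B (C.filter fun c => c ∉ B) :=
  partFun_le_partFun hlam hAB hBb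
    (Finset.monotone_filter_right C fun _ _ hcB hcA => hcB (hAB hcA))

/-- The hard-sphere partition function grows when the domain absorbs part of the
boundary condition: for bounded Borel sets `A ⊆ B`,
`Z(A, C \ A, λ) ≤ Z(B, C \ B, λ)`. -/
theorem partFun_mono_domain (d : ℕ) (R lam : ℝ) (hR : 0 ≤ R) (hlam : 0 ≤ lam)
    (A B : Set (EuclideanSpace ℝ (Fin d)))
    (hAm : MeasurableSet A) (hBm : MeasurableSet B)
    (hBb : Bornology.IsBounded B) (hAB : A ⊆ B)
    (C : Finset (EuclideanSpace ℝ (Fin d))) :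
    partFun d R lam A (C.filter fun c => c ∉ A) ≤
      partFun d R lam B (C.filter fun c => c ∉ B) :=
  partFun_mono_domain_general d R lam hlam A B hBb hAB C
end

section
/- DLR-type factorisation of the partition function over a disjoint splitting of the domain: let A, B ⊆ ℝ^d be disjoint bounded Borel sets, C ⊆ ℝ^d a finite set disjoint from A ∪ B, λ ≥ 0 and R ≥ 0. Then Z(A ∪ B, C, λ) = Σ_{k=0}^∞ (λ^k/k!) ∫_{A^k} h_k(x|C) · Z(B, C ∪ {x_1, …, x_k}, λ) dx, where the integral over A^k is with respect to k-fold Lebesgue measure. -/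
open MeasureTheory
open scoped Classical

/-!
Split `(A ∪ B)ⁿ` into the `2ⁿ` boxes in which every coordinate is assigned to `A` or to `B`.
Since the hard-core condition is invariant under relabelling, the box with `k` coordinates in `A`
and `m` in `B` contributes the measure of `{(x, y) ∈ Aᵏ × Bᵐ | h(x ++ y | C) = 1}`, and there are
`(k+m choose k)` such boxes. The indicator of a concatenation factorises,
`h(x ++ y | C) = h(x | C) · h(y | C ∪ {x₁, …, x_k})`, so Fubini turns this measure into
`∫_{Aᵏ} h(x | C) · ∫_{Bᵐ} h(y | C ∪ x)`. The binomial coefficient cancels against `λⁿ / n!`,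
and the double series over `k + m = n` splits into the iterated series over `k` and `m`.
Everything is done in `ℝ≥0∞`, where the rearrangements are unconditional; boundedness of `A` and
`B` makes all quantities finite, which transfers the identity to the real-valued `partFun`.
-/

open scoped ENNReal
open Finset

theorem Finset.sum_card_card_compl {α M : Type*} [Fintype α] [DecidableEq α] [AddCommMonoid M]
    (g : ℕ × ℕ → M) :
    ∑ s : Finset α, g (#s, #sᶜ) =
      ∑ p ∈ antidiagonal (Fintype.card α), (Fintype.card α).choose p.1 • g p := by
  simp_rw [Finset.card_compl, Finset.Nat.sum_antidiagonal_eq_sum_range_succ_mk]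
  rw [← Finset.powerset_univ]
  exact Finset.sum_powerset_apply_card (fun j => g (j, Fintype.card α - j))

theorem ENNReal.tsum_sum_antidiagonal (f : ℕ × ℕ → ℝ≥0∞) :
    ∑' n, ∑ p ∈ antidiagonal n, f p = ∑' p, f p := by
  rw [← Finset.HasAntidiagonal.sigmaAntidiagonalEquivProd.tsum_eq, ENNReal.tsum_sigma']
  exact tsum_congr fun n => (Finset.tsum_subtype _ f).symm

theorem ENNReal.ofReal_pow_div_factorial_add_mul_choose {a : ℝ} (ha : 0 ≤ a) (k m : ℕ) :
    ENNReal.ofReal (a ^ (k + m) / (k + m).factorial) * ((k + m).choose k : ℝ≥0∞) =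
      ENNReal.ofReal (a ^ k / k.factorial) * ENNReal.ofReal (a ^ m / m.factorial) := by
  rw [← ENNReal.ofReal_natCast, ← ENNReal.ofReal_mul (by positivity),
    ← ENNReal.ofReal_mul (by positivity)]
  congr 1
  have hfact : ((k + m).choose k : ℝ) * k.factorial * m.factorial = (k + m).factorial := by
    rw [Nat.choose_symm_add]
    exact_mod_cast Nat.add_choose_mul_factorial_mul_factorial k m
  have hchoose : ((k + m).choose k : ℝ) ≠ 0 :=
    Nat.cast_ne_zero.2 (Nat.choose_pos (Nat.le_add_right k m)).ne'
  rw [← hfact, pow_add]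
  field_simp

theorem MeasureTheory.measure_univ_pi_union_inter {X ι : Type*} [MeasurableSpace X] [Fintype ι]
    [DecidableEq ι] {A B : Set X} (hA : MeasurableSet A) (hB : MeasurableSet B)
    (hAB : Disjoint A B) (ρ : Measure (ι → X)) {S : Set (ι → X)} (hS : MeasurableSet S) :
    ρ (Set.univ.pi (fun _ => A ∪ B) ∩ S) =
      ∑ s : Finset ι, ρ (Set.univ.pi (fun i => if i ∈ s then A else B) ∩ S) := by
  have hcover : Set.univ.pi (fun _ : ι => A ∪ B) =
      ⋃ s : Finset ι, Set.univ.pi (fun i => if i ∈ s then A else B) := by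
    ext z
    simp only [Set.mem_univ_pi, Set.mem_union, Set.mem_iUnion]
    constructor
    · intro hz
      refine ⟨Finset.univ.filter (z · ∈ A), fun i => ?_⟩
      by_cases hi : z i ∈ A <;> simp [hi, (hz i).resolve_left]
    · rintro ⟨s, hs⟩ i
      have := hs i
      split_ifs at this
      exacts [.inl this, .inr this]
  have hdisj : Pairwise (Function.onFun Disjoint fun s : Finset ι =>
      Set.univ.pi (fun i => if i ∈ s then A else B) ∩ S) := by
    intro s t hst
    refine Set.disjoint_left.2 fun z hzs hzt => hst (Finset.ext fun i => ?_)
    have hmem (u : Finset ι) (hu : z i ∈ if i ∈ u then A else B) : i ∈ u ↔ z i ∈ A := by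
      split_ifs at hu with hi
      exacts [iff_of_true hi hu, iff_of_false hi (Set.disjoint_right.1 hAB hu)]
    rw [hmem s (hzs.1 i (Set.mem_univ i)), hmem t (hzt.1 i (Set.mem_univ i))]
  rw [hcover, Set.iUnion_inter, measure_iUnion hdisj
    (fun s => (MeasurableSet.univ_pi fun i => by split_ifs; exacts [hA, hB]).inter hS),
    tsum_fintype]

namespace HardSphere

section Admissible

variable {X : Type*} [PseudoMetricSpace X] {R : ℝ} {C : Finset X} {ι κ ν : Type*}

/-- The hard-core condition of `hsInd`, for configurations indexed by an arbitrary type (hence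
with `i ≠ j` in place of `i < j`). -/
def Admissible (R : ℝ) (C : Finset X) (x : ι → X) : Prop :=
  Pairwise (fun i j => R < dist (x i) (x j)) ∧ ∀ i, ∀ c ∈ C, R < dist (x i) c

def admissibleSet (R : ℝ) (C : Finset X) (ι : Type*) : Set (ι → X) :=
  {x | Admissible R C x}

theorem admissible_iff_lt [LinearOrder ι] {x : ι → X} :
    Admissible R C x ↔
      (∀ i j, i < j → R < dist (x i) (x j)) ∧ ∀ i, ∀ c ∈ C, R < dist (x i) c := by
  refine and_congr_left' ⟨fun h i j hij => h hij.ne, fun h i j hij => ?_⟩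
  rcases hij.lt_or_gt with hij | hij
  exacts [h i j hij, dist_comm (x i) (x j) ▸ h j i hij]

theorem admissible_comp_equiv (e : ι ≃ κ) (x : κ → X) :
    Admissible R C (x ∘ e) ↔ Admissible R C x :=
  and_congr (EquivLike.pairwise_comp_iff e (fun i j => R < dist (x i) (x j)))
    (e.surjective.forall (p := fun j => ∀ c ∈ C, R < dist (x j) c)).symm

theorem admissible_sumElim [DecidableEq X] [Fintype κ] (x : κ → X) (y : ν → X) :
    Admissible R C (Sum.elim x y) ↔
      Admissible R C x ∧ Admissible R (C ∪ Finset.univ.image x) y := by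
  simp only [Admissible, Pairwise, Sum.forall, Sum.elim_inl, Sum.elim_inr, ne_eq,
    Sum.inl.injEq, Sum.inr.injEq, reduceCtorEq, not_false_eq_true, forall_const,
    Finset.mem_union, Finset.mem_image, Finset.mem_univ, true_and, forall_and]
  constructor
  · rintro ⟨⟨⟨hxx, hyx⟩, -, hyy⟩, hxC, hyC⟩
    refine ⟨⟨hxx, hxC⟩, hyy, fun i c hc => ?_⟩
    rcases hc with hc | ⟨j, rfl⟩
    exacts [hyC i c hc, hyx i j]
  · rintro ⟨⟨hxx, hxC⟩, hyy, hyC⟩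
    refine ⟨⟨⟨hxx, fun i j => hyC i (x j) (.inr ⟨j, rfl⟩)⟩, fun i j => ?_, hyy⟩, hxC,
      fun i c hc => hyC i c (.inl hc)⟩
    rw [dist_comm]
    exact hyC j (x i) (.inr ⟨i, rfl⟩)

theorem isOpen_admissibleSet [Finite ι] : IsOpen (admissibleSet R C ι) := by
  have hpair (i j : ι) : IsOpen {x : ι → X | R < dist (x i) (x j)} :=
    isOpen_lt continuous_const ((continuous_apply i).dist (continuous_apply j))
  have hbdry (i : ι) (c : X) : IsOpen {x : ι → X | R < dist (x i) c} :=
    isOpen_lt continuous_const ((continuous_apply i).dist continuous_const)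
  simp only [admissibleSet, Admissible, Pairwise, Set.ofPred_and, Set.ofPred_forall]
  exact (isOpen_iInter_of_finite fun i => isOpen_iInter_of_finite fun j =>
    isOpen_iInter_of_finite fun _ => hpair i j).inter
    (isOpen_iInter_of_finite fun i => isOpen_biInter_finset fun c _ => hbdry i c)

end Admissible

section Measure

variable {X : Type*} [PseudoMetricSpace X] [MeasurableSpace X] {μ : Measure X}
  {R lam : ℝ} {A B D : Set X} {C : Finset X} {ι κ ν : Type*}

variable (μ) in
noncomputable def ePartFun (R lam : ℝ) (D : Set X) (C : Finset X) : ℝ≥0∞ :=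
  ∑' n : ℕ, ENNReal.ofReal (lam ^ n / n.factorial) *
    Measure.pi (fun _ : Fin n => μ) (Set.univ.pi (fun _ => D) ∩ admissibleSet R C (Fin n))

section Conditioning

variable [DecidableEq X] [Fintype κ]

theorem measure_setOf_admissible_sumElim (x : κ → X) (m : ℕ) :
    Measure.pi (fun _ : Fin m => μ)
        {y | y ∈ Set.univ.pi (fun _ => B) ∧ Admissible R C (Sum.elim x y)} =
      (admissibleSet R C κ).indicator (fun x => Measure.pi (fun _ : Fin m => μ)
        (Set.univ.pi (fun _ => B) ∩ admissibleSet R (C ∪ Finset.univ.image x) (Fin m))) x := by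
  by_cases hx : x ∈ admissibleSet R C κ
  · rw [Set.indicator_of_mem hx]
    congr 1 with y
    exact (and_congr_right' ((admissible_sumElim x y).trans (and_iff_right hx)))
  · rw [Set.indicator_of_notMem hx]
    exact measure_mono_null (fun y hy => hx ((admissible_sumElim x y).1 hy.2).1) measure_empty

theorem tsum_measure_setOf_admissible_sumElim (x : κ → X) :
    ∑' m : ℕ, ENNReal.ofReal (lam ^ m / m.factorial) * Measure.pi (fun _ : Fin m => μ)
        {y | y ∈ Set.univ.pi (fun _ => B) ∧ Admissible R C (Sum.elim x y)} =
      (admissibleSet R C κ).indicator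
        (fun x => ePartFun μ R lam B (C ∪ Finset.univ.image x)) x := by
  simp_rw [measure_setOf_admissible_sumElim]
  by_cases hx : x ∈ admissibleSet R C κ
  · simp only [Set.indicator_of_mem hx, ePartFun]
  · simp [Set.indicator_of_notMem hx]

end Conditioning

variable [SigmaFinite μ]

theorem ePartFun_le_exp (hlam : 0 ≤ lam) (hD : μ D ≠ ∞) :
    ePartFun μ R lam D C ≤ ENNReal.ofReal (Real.exp (lam * μ.real D)) := by
  have hterm (n : ℕ) : ENNReal.ofReal (lam ^ n / n.factorial) * μ D ^ n =
      ENNReal.ofReal ((lam * μ.real D) ^ n / n.factorial) := by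
    rw [← ENNReal.ofReal_toReal hD, ← ENNReal.ofReal_pow ENNReal.toReal_nonneg,
      ← ENNReal.ofReal_mul (by positivity), measureReal_def, mul_pow, mul_div_right_comm]
  calc ePartFun μ R lam D C
      ≤ ∑' n : ℕ, ENNReal.ofReal (lam ^ n / n.factorial) * μ D ^ n := by
        refine ENNReal.tsum_le_tsum fun n => mul_le_mul_right ?_ _
        calc _ ≤ Measure.pi (fun _ : Fin n => μ) (Set.univ.pi fun _ => D) :=
              measure_mono Set.inter_subset_left
          _ = μ D ^ n := by simp [Measure.pi_pi]
    _ = ENNReal.ofReal (∑' n : ℕ, (lam * μ.real D) ^ n / n.factorial) := by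
        rw [ENNReal.ofReal_tsum_of_nonneg (fun n => by positivity)
          (Real.summable_pow_div_factorial _)]
        exact tsum_congr hterm
    _ = ENNReal.ofReal (Real.exp (lam * μ.real D)) := by
        rw [Real.exp_eq_exp_ℝ, NormedSpace.exp_eq_tsum_div]

theorem ePartFun_ne_top (hlam : 0 ≤ lam) (hD : μ D ≠ ∞) : ePartFun μ R lam D C ≠ ∞ :=
  ne_top_of_le_ne_top ENNReal.ofReal_ne_top (ePartFun_le_exp hlam hD)

theorem measure_pi_inter_admissibleSet_eq_prod [Fintype ι] [Fintype κ] [Fintype ν]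
    (e : κ ⊕ ν ≃ ι) (D : ι → Set X) :
    Measure.pi (fun _ : ι => μ) (Set.univ.pi D ∩ admissibleSet R C ι) =
      ((Measure.pi fun _ : κ => μ).prod (Measure.pi fun _ : ν => μ))
        {p | p.1 ∈ Set.univ.pi (fun a => D (e (.inl a))) ∧
          p.2 ∈ Set.univ.pi (fun b => D (e (.inr b))) ∧ Admissible R C (Sum.elim p.1 p.2)} := by
  let T := (MeasurableEquiv.sumPiEquivProdPi fun _ : κ ⊕ ν => X).symm.trans
    (MeasurableEquiv.piCongrLeft (fun _ : ι => X) e)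
  have hT : MeasurePreserving T _ (Measure.pi fun _ : ι => μ) :=
    (measurePreserving_piCongrLeft (fun _ : ι => μ) e).comp
      (measurePreserving_sumPiEquivProdPi_symm fun _ : κ ⊕ ν => μ)
  rw [← hT.measure_preimage_equiv]
  congr 1
  ext ⟨x, y⟩
  have hTxy : T (x, y) = Sum.elim x y ∘ e.symm := by
    funext i
    simp only [T, MeasurableEquiv.trans_apply, MeasurableEquiv.coe_piCongrLeft,
      Equiv.piCongrLeft_apply_eq_cast, cast_eq, Function.comp_apply]
    cases e.symm i <;> rfl
  simp only [Set.mem_preimage, Set.mem_inter_iff, hTxy, admissibleSet, Set.mem_ofPred_eq,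
    admissible_comp_equiv, Set.mem_univ_pi, Function.comp_apply]
  rw [e.surjective.forall]
  simp [Sum.forall, and_assoc]

theorem measure_pi_ite_inter_admissibleSet {n : ℕ} (s : Finset (Fin n)) :
    Measure.pi (fun _ : Fin n => μ)
        (Set.univ.pi (fun i => if i ∈ s then A else B) ∩ admissibleSet R C (Fin n)) =
      ((Measure.pi fun _ : Fin #s => μ).prod (Measure.pi fun _ : Fin #sᶜ => μ))
        {p | p.1 ∈ Set.univ.pi (fun _ => A) ∧ p.2 ∈ Set.univ.pi (fun _ => B) ∧
          Admissible R C (Sum.elim p.1 p.2)} := by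
  rw [measure_pi_inter_admissibleSet_eq_prod (finSumEquivOfFinset (s := s) rfl rfl)]
  have hs (a : Fin #s) : finSumEquivOfFinset (s := s) rfl rfl (.inl a) ∈ s :=
    s.orderEmbOfFin_mem rfl a
  have hsc (b : Fin #sᶜ) : finSumEquivOfFinset (s := s) rfl rfl (.inr b) ∉ s :=
    Finset.mem_compl.1 (sᶜ.orderEmbOfFin_mem rfl b)
  simp only [hs, hsc, if_true, if_false]

variable [OpensMeasurableSpace X] [SecondCountableTopology X]

theorem measurableSet_admissibleSet [Finite ι] : MeasurableSet (admissibleSet R C ι) :=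
  isOpen_admissibleSet.measurableSet

variable [Fintype κ]

theorem measurable_measure_setOf_admissible_sumElim (hB : MeasurableSet B) (m : ℕ) :
    Measurable fun x : κ → X => Measure.pi (fun _ : Fin m => μ)
      {y | y ∈ Set.univ.pi (fun _ => B) ∧ Admissible R C (Sum.elim x y)} := by
  refine measurable_measure_prodMk_left (ν := Measure.pi fun _ : Fin m => μ)
    (s := {p : (κ → X) × (Fin m → X) |
      p.2 ∈ Set.univ.pi (fun _ => B) ∧ Admissible R C (Sum.elim p.1 p.2)}) ?_
  exact (measurable_snd (MeasurableSet.univ_pi fun _ => hB)).inter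
    (measurableSet_admissibleSet.preimage
      (MeasurableEquiv.sumPiEquivProdPi fun _ : κ ⊕ Fin m => X).symm.measurable)

theorem prod_measure_setOf_admissible_sumElim [Fintype ν] (hA : MeasurableSet A)
    (hB : MeasurableSet B) :
    ((Measure.pi fun _ : κ => μ).prod (Measure.pi fun _ : ν => μ))
        {p | p.1 ∈ Set.univ.pi (fun _ => A) ∧ p.2 ∈ Set.univ.pi (fun _ => B) ∧
          Admissible R C (Sum.elim p.1 p.2)} =
      ∫⁻ x in Set.univ.pi (fun _ => A), Measure.pi (fun _ : ν => μ)
        {y | y ∈ Set.univ.pi (fun _ => B) ∧ Admissible R C (Sum.elim x y)}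
        ∂Measure.pi fun _ : κ => μ := by
  have hS : MeasurableSet {p : (κ → X) × (ν → X) | p.1 ∈ Set.univ.pi (fun _ => A) ∧
      p.2 ∈ Set.univ.pi (fun _ => B) ∧ Admissible R C (Sum.elim p.1 p.2)} :=
    (measurable_fst (MeasurableSet.univ_pi fun _ => hA)).inter
      ((measurable_snd (MeasurableSet.univ_pi fun _ => hB)).inter
        (measurableSet_admissibleSet.preimage
          (MeasurableEquiv.sumPiEquivProdPi fun _ : κ ⊕ ν => X).symm.measurable))
  rw [Measure.prod_apply hS, ← lintegral_indicator (MeasurableSet.univ_pi fun _ => hA)]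
  congr 1 with x
  by_cases hx : x ∈ Set.univ.pi (fun _ => A)
  · rw [Set.indicator_of_mem hx]
    congr 1 with y
    exact and_iff_right hx
  · rw [Set.indicator_of_notMem hx]
    exact measure_mono_null (fun y hy => (hx hy.1).elim) measure_empty

variable [DecidableEq X]

theorem measurable_indicator_ePartFun (hB : MeasurableSet B) :
    Measurable fun x : κ → X => (admissibleSet R C κ).indicator
      (fun x => ePartFun μ R lam B (C ∪ Finset.univ.image x)) x := by
  simp_rw [← tsum_measure_setOf_admissible_sumElim]
  exact .tsum fun m => (measurable_measure_setOf_admissible_sumElim hB m).const_mul _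

theorem lintegral_indicator_ePartFun (hB : MeasurableSet B) (ρ : Measure (κ → X)) :
    ∫⁻ x, (admissibleSet R C κ).indicator
        (fun x => ePartFun μ R lam B (C ∪ Finset.univ.image x)) x ∂ρ =
      ∑' m : ℕ, ENNReal.ofReal (lam ^ m / m.factorial) * ∫⁻ x, Measure.pi (fun _ : Fin m => μ)
        {y | y ∈ Set.univ.pi (fun _ => B) ∧ Admissible R C (Sum.elim x y)} ∂ρ := by
  simp_rw [← tsum_measure_setOf_admissible_sumElim,
    ← lintegral_const_mul _ (measurable_measure_setOf_admissible_sumElim hB _)]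
  exact lintegral_tsum fun m =>
    ((measurable_measure_setOf_admissible_sumElim hB m).const_mul _).aemeasurable

theorem ePartFun_union (hA : MeasurableSet A) (hB : MeasurableSet B) (hAB : Disjoint A B)
    (hlam : 0 ≤ lam) :
    ePartFun μ R lam (A ∪ B) C =
      ∑' k : ℕ, ENNReal.ofReal (lam ^ k / k.factorial) *
        ∫⁻ x in Set.univ.pi (fun _ : Fin k => A), (admissibleSet R C (Fin k)).indicator
          (fun x => ePartFun μ R lam B (C ∪ Finset.univ.image x)) x ∂Measure.pi fun _ => μ := by
  set P : ℕ × ℕ → ℝ≥0∞ := fun p =>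
    ((Measure.pi fun _ : Fin p.1 => μ).prod (Measure.pi fun _ : Fin p.2 => μ))
      {q | q.1 ∈ Set.univ.pi (fun _ => A) ∧ q.2 ∈ Set.univ.pi (fun _ => B) ∧
        Admissible R C (Sum.elim q.1 q.2)} with hP
  calc ePartFun μ R lam (A ∪ B) C
      = ∑' n : ℕ, ENNReal.ofReal (lam ^ n / n.factorial) *
          ∑ p ∈ antidiagonal n, n.choose p.1 • P p := by
        refine tsum_congr fun n => ?_
        rw [measure_univ_pi_union_inter hA hB hAB _ measurableSet_admissibleSet]
        simp_rw [measure_pi_ite_inter_admissibleSet]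
        rw [Finset.sum_card_card_compl (fun p => P p), Fintype.card_fin]
    _ = ∑' n : ℕ, ∑ p ∈ antidiagonal n, ENNReal.ofReal (lam ^ p.1 / p.1.factorial) *
          (ENNReal.ofReal (lam ^ p.2 / p.2.factorial) * P p) := by
        refine tsum_congr fun n => ?_
        rw [Finset.mul_sum]
        refine Finset.sum_congr rfl fun p hp => ?_
        rw [HasAntidiagonal.mem_antidiagonal] at hp
        subst hp
        rw [nsmul_eq_mul, ← mul_assoc, ← mul_assoc,
          ENNReal.ofReal_pow_div_factorial_add_mul_choose hlam]
    _ = ∑' k : ℕ, ENNReal.ofReal (lam ^ k / k.factorial) *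
          ∑' m : ℕ, ENNReal.ofReal (lam ^ m / m.factorial) * P (k, m) := by
        rw [ENNReal.tsum_sum_antidiagonal, ENNReal.tsum_prod']
        simp_rw [ENNReal.tsum_mul_left]
    _ = _ := by
        simp_rw [hP, prod_measure_setOf_admissible_sumElim hA hB,
          lintegral_indicator_ePartFun hB]

end Measure

section Euclidean

variable {d : ℕ} {R lam : ℝ} {A B D : Set (EuclideanSpace ℝ (Fin d))}
  {C : Finset (EuclideanSpace ℝ (Fin d))}

theorem hsInd_eq_indicator {n : ℕ} (x : Fin n → EuclideanSpace ℝ (Fin d)) :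
    hsInd d R C x = (admissibleSet R C (Fin n)).indicator 1 x := by
  by_cases hx : x ∈ admissibleSet R C (Fin n)
  · rw [Set.indicator_of_mem hx, hsInd, if_pos (admissible_iff_lt.1 hx), Pi.one_apply]
  · rw [Set.indicator_of_notMem hx, hsInd, if_neg (mt admissible_iff_lt.2 hx)]

theorem partFun_eq_toReal (hD : volume D ≠ ∞) (hlam : 0 ≤ lam) :
    partFun d R lam D C = (ePartFun volume R lam D C).toReal := by
  have hfin : ePartFun volume R lam D C ≠ ∞ := ePartFun_ne_top hlam hD
  rw [ePartFun] at hfin ⊢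
  rw [ENNReal.tsum_toReal_eq fun n => ne_top_of_le_ne_top hfin (ENNReal.le_tsum n), partFun]
  refine tsum_congr fun n => ?_
  rw [ENNReal.toReal_mul, ENNReal.toReal_ofReal (by positivity)]
  simp_rw [hsInd_eq_indicator]
  rw [integral_indicator_one measurableSet_admissibleSet,
    measureReal_restrict_apply measurableSet_admissibleSet, Set.inter_comm]
  rfl

theorem integral_hsInd_mul_partFun (hB : MeasurableSet B) (hBfin : volume B ≠ ∞)
    (hlam : 0 ≤ lam) (k : ℕ) :
    ∫ x in Set.univ.pi (fun _ : Fin k => A),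
        hsInd d R C x * partFun d R lam B (C ∪ Finset.univ.image x) =
      (∫⁻ x in Set.univ.pi (fun _ : Fin k => A), (admissibleSet R C (Fin k)).indicator
        (fun x => ePartFun volume R lam B (C ∪ Finset.univ.image x)) x
        ∂Measure.pi fun _ => volume).toReal := by
  have hpt (x : Fin k → EuclideanSpace ℝ (Fin d)) :
      hsInd d R C x * partFun d R lam B (C ∪ Finset.univ.image x) =
        ((admissibleSet R C (Fin k)).indicator
          (fun x => ePartFun volume R lam B (C ∪ Finset.univ.image x)) x).toReal := by
    rw [hsInd_eq_indicator, partFun_eq_toReal hBfin hlam]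
    by_cases hx : x ∈ admissibleSet R C (Fin k)
    · rw [Set.indicator_of_mem hx, Set.indicator_of_mem hx, Pi.one_apply, one_mul]
    · rw [Set.indicator_of_notMem hx, Set.indicator_of_notMem hx, zero_mul,
        ENNReal.toReal_zero]
  simp_rw [hpt]
  refine integral_toReal (measurable_indicator_ePartFun hB).aemeasurable
    (ae_of_all _ fun x => ?_)
  exact (Set.indicator_le_self _ _ x).trans_lt (ePartFun_ne_top hlam hBfin).lt_top

end Euclidean

end HardSphere

open HardSphere

theorem partFun_dlr_general (d : ℕ) (R lam : ℝ) (hlam : 0 ≤ lam)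
    (A B : Set (EuclideanSpace ℝ (Fin d)))
    (hAm : MeasurableSet A) (hBm : MeasurableSet B)
    (hAb : Bornology.IsBounded A) (hBb : Bornology.IsBounded B)
    (hAB : Disjoint A B)
    (C : Finset (EuclideanSpace ℝ (Fin d))) :
    partFun d R lam (A ∪ B) C =
      ∑' k : ℕ, (lam ^ k / k.factorial) *
        ∫ x in Set.univ.pi (fun _ : Fin k => A),
          hsInd d R C x *
            partFun d R lam B (C ∪ Finset.image x Finset.univ) := by
  have hfin : volume (A ∪ B) ≠ ∞ := (hAb.union hBb).measure_lt_top.ne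
  have hsplit := ePartFun_union (μ := volume) (R := R) (C := C) hAm hBm hAB hlam
  have hterms_fin := ePartFun_ne_top (R := R) (C := C) hlam hfin
  rw [hsplit] at hterms_fin
  rw [partFun_eq_toReal hfin hlam, hsplit,
    ENNReal.tsum_toReal_eq fun k => ne_top_of_le_ne_top hterms_fin (ENNReal.le_tsum k)]
  refine tsum_congr fun k => ?_
  rw [ENNReal.toReal_mul, ENNReal.toReal_ofReal (by positivity),
    integral_hsInd_mul_partFun hBm hBb.measure_lt_top.ne hlam]

/-- DLR-type factorisation of the partition function over a disjoint splitting of the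
domain: for disjoint bounded Borel sets `A`, `B` and a finite boundary condition `C`
disjoint from `A ∪ B`,
`Z(A ∪ B, C, λ) = Σ_k (λ^k/k!) ∫_{A^k} h_k(x|C) · Z(B, C ∪ {x_1,…,x_k}, λ) dx`. -/
theorem partFun_dlr (d : ℕ) (R lam : ℝ) (hR : 0 ≤ R) (hlam : 0 ≤ lam)
    (A B : Set (EuclideanSpace ℝ (Fin d)))
    (hAm : MeasurableSet A) (hBm : MeasurableSet B)
    (hAb : Bornology.IsBounded A) (hBb : Bornology.IsBounded B)
    (hAB : Disjoint A B)
    (C : Finset (EuclideanSpace ℝ (Fin d)))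
    (hC : ∀ c ∈ C, c ∉ A ∪ B) :
    partFun d R lam (A ∪ B) C =
      ∑' k : ℕ, (lam ^ k / k.factorial) *
        ∫ x in Set.univ.pi (fun _ : Fin k => A),
          hsInd d R C x *
            partFun d R lam B (C ∪ Finset.image x Finset.univ) :=
  partFun_dlr_general d R lam hlam A B hAm hBm hAb hBb hAB C
end

section
/- One-dimensional derivative of the partition function (one-dimensional instance of the paper's Proposition on the derivative of the log-partition function): let d = 1, R ≥ 0, λ ≥ 0, a < b reals, and C ⊆ ℝ a finite set. Define z : (a,b) → ℝ by z(x) := Z((x,b), C, λ). Then for Lebesgue-almost every x ∈ (a,b), z is differentiable at x with z'(x) = −λ · 1[∀ c ∈ C, |x − c| > R] · Z((x,b), C ∪ {x}, λ). Equivalently, wherever z'(x) exists and λ > 0, −(1/λ) (d/dx) log Z((x,b), C, λ) = 1[∀ c ∈ C, |x − c| > R] · Z((x,b), C ∪ {x}, λ) / Z((x,b), C, λ). -/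
open MeasureTheory
open scoped Classical

/-- One-dimensional hard-core indicator of a tuple `x = (x 0, …, x (n-1))` of points
of `ℝ` under boundary condition `C`: equals `1` iff `|x i - x j| > R` for all `i < j`
and `|x i - c| > R` for all `i` and all `c ∈ C`. -/
noncomputable def hsInd1 (R : ℝ) (C : Finset ℝ) {n : ℕ} (x : Fin n → ℝ) : ℝ :=
  if (∀ i j : Fin n, i < j → R < |x i - x j|) ∧ (∀ i : Fin n, ∀ c ∈ C, R < |x i - c|)
    then 1 else 0

/-- The one-dimensional hard-sphere partition function
`Z(B,C,λ) = Σ_{n≥0} (λ^n/n!) ∫_{B^n} h_n(x|C) dx`. -/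
noncomputable def partFun1 (R lam : ℝ) (B : Set ℝ) (C : Finset ℝ) : ℝ :=
  ∑' n : ℕ, (lam ^ n / n.factorial) *
    ∫ x in Set.univ.pi (fun _ : Fin n => B), hsInd1 R C x

/-!
Cutting a configuration of `m + 1` points in `(t, b)` at its lowest point `s` (unique, as the
points are `R`-separated with `R ≥ 0`) leaves `m` points in `(s, b)` avoiding `C ∪ {s}`, and the
`m + 1` possible labels of the lowest point contribute equal volumes. Summed over `m`, this gives
`Z((t,b), C) = 1 + ∫_t^b λ 1[s free for C] Z((s,b), C ∪ {s}) ds`, whose integrand does not depend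
on `t`. The integrand is integrable, so the Lebesgue differentiation theorem gives the derivative
at almost every `x`; since `Z ≥ 1`, the logarithmic derivative follows. The series are summed in
`ℝ≥0∞`, where sums and integrals commute without side conditions.
-/

open Set Function Filter Topology
open scoped ENNReal

theorem Fin.pairwise_iff_succAbove {n : ℕ} {r : Fin (n + 1) → Fin (n + 1) → Prop}
    [Std.Symm r] (p : Fin (n + 1)) :
    Pairwise r ↔
      (∀ k, r p (p.succAbove k)) ∧ Pairwise fun k l => r (p.succAbove k) (p.succAbove l) := by
  refine ⟨fun h => ⟨fun k => h (p.succAbove_ne k).symm,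
    fun k l hkl => h (p.succAbove_right_injective.ne hkl)⟩, ?_⟩
  rintro ⟨hp, h⟩ j j' hjj'
  rcases p.eq_self_or_eq_succAbove j with hj | ⟨k, rfl⟩ <;>
    rcases p.eq_self_or_eq_succAbove j' with hj' | ⟨l, rfl⟩
  · exact absurd (hj.trans hj'.symm) hjj'
  · exact hj ▸ hp l
  · exact hj' ▸ Std.Symm.symm p _ (hp k)
  · exact h fun hkl => hjj' (congrArg _ hkl)

namespace HardCore

instance (R : ℝ) {ι : Type*} (x : ι → ℝ) : Std.Symm fun i j => R < |x i - x j| :=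
  ⟨fun i j h => by rwa [abs_sub_comm]⟩

def configs (R : ℝ) (C : Finset ℝ) (t b : ℝ) (n : ℕ) : Set (Fin n → ℝ) :=
  {x | (∀ i, x i ∈ Ioo t b) ∧ Pairwise (fun i j => R < |x i - x j|) ∧
    ∀ i, ∀ c ∈ C, R < |x i - c|}

def freePoints (R : ℝ) (C : Finset ℝ) : Set ℝ :=
  {s | ∀ c ∈ C, R < |s - c|}

def lowestAt (R : ℝ) (C : Finset ℝ) (t b : ℝ) (m : ℕ) (i : Fin (m + 1)) :
    Set (Fin (m + 1) → ℝ) :=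
  {x | x ∈ configs R C t b (m + 1) ∧ ∀ j ≠ i, x i < x j}

def pinnedConfigs (R : ℝ) (C : Finset ℝ) (b : ℝ) (m : ℕ) : Set (ℝ × (Fin m → ℝ)) :=
  {p | p.2 ∈ configs R (insert p.1 C) p.1 b m}

lemma isOpen_configs (R : ℝ) (C : Finset ℝ) (t b : ℝ) (n : ℕ) :
    IsOpen (configs R C t b n) := by
  simp only [configs, Pairwise, mem_Ioo, ofPred_and, ofPred_forall]
  refine .inter (isOpen_iInter_of_finite fun i => .inter ?_ ?_)
    (.inter (isOpen_iInter_of_finite fun i => isOpen_iInter_of_finite fun j =>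
      isOpen_iInter_of_finite fun _ => ?_)
    (isOpen_iInter_of_finite fun i => isOpen_biInter_finset fun c _ => ?_)) <;>
  exact isOpen_lt (by fun_prop) (by fun_prop)

lemma isOpen_freePoints (R : ℝ) (C : Finset ℝ) : IsOpen (freePoints R C) := by
  simp only [freePoints, ofPred_forall]
  exact isOpen_biInter_finset fun c _ => isOpen_lt (by fun_prop) (by fun_prop)

lemma isOpen_pinnedConfigs (R : ℝ) (C : Finset ℝ) (b : ℝ) (m : ℕ) :
    IsOpen (pinnedConfigs R C b m) := by
  simp only [pinnedConfigs, configs, mem_ofPred_eq]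
  simp only [Pairwise, mem_Ioo, Finset.forall_mem_insert, forall_and, ofPred_and, ofPred_forall]
  refine .inter
    (.inter (isOpen_iInter_of_finite fun i => ?_) (isOpen_iInter_of_finite fun i => ?_))
    (.inter (isOpen_iInter_of_finite fun i => isOpen_iInter_of_finite fun j =>
      isOpen_iInter_of_finite fun _ => ?_)
    (.inter (isOpen_iInter_of_finite fun i => ?_)
      (isOpen_iInter_of_finite fun i => isOpen_biInter_finset fun c _ => ?_))) <;>
  exact isOpen_lt (by fun_prop) (by fun_prop)

lemma measurable_volume_pinnedConfigs (R : ℝ) (C : Finset ℝ) (b : ℝ) (m : ℕ) :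
    Measurable fun s => volume (configs R (insert s C) s b m) :=
  measurable_measure_prodMk_left (isOpen_pinnedConfigs R C b m).measurableSet

lemma configs_zero (R : ℝ) (C : Finset ℝ) (t b : ℝ) : configs R C t b 0 = univ :=
  eq_univ_of_forall fun _ => ⟨fun i => i.elim0, fun i => i.elim0, fun i => i.elim0⟩

lemma volume_configs_le (R : ℝ) (C : Finset ℝ) (t b : ℝ) (n : ℕ) :
    volume (configs R C t b n) ≤ ENNReal.ofReal (b - t) ^ n :=
  calc volume (configs R C t b n) ≤ volume (univ.pi fun _ : Fin n => Ioo t b) :=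
        measure_mono fun x hx => mem_univ_pi.2 hx.1
    _ = ENNReal.ofReal (b - t) ^ n := by simp [volume_pi_pi]

lemma volume_configs_ne_top (R : ℝ) (C : Finset ℝ) (t b : ℝ) (n : ℕ) :
    volume (configs R C t b n) ≠ ⊤ :=
  ne_top_of_le_ne_top (by simp) (volume_configs_le R C t b n)

lemma setIntegral_hsInd1 (R : ℝ) (C : Finset ℝ) (t b : ℝ) (n : ℕ) :
    ∫ x in univ.pi (fun _ : Fin n => Ioo t b), hsInd1 R C x =
      volume.real (configs R C t b n) := by
  have hind :
      EqOn (hsInd1 R C) ((configs R C t b n).indicator 1) (univ.pi fun _ => Ioo t b) := by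
    intro x hx
    simp only [hsInd1, indicator_apply, configs, mem_ofPred_eq, pairwise_iff_lt,
      mem_univ_pi.1 hx, implies_true, true_and, Pi.one_apply]
  rw [setIntegral_congr_fun (MeasurableSet.univ_pi fun _ => measurableSet_Ioo) hind,
    setIntegral_indicator (isOpen_configs R C t b n).measurableSet,
    inter_eq_right.2 fun x hx => mem_univ_pi.2 hx.1, Pi.one_def, setIntegral_const, smul_eq_mul,
    mul_one]

lemma mem_lowestAt_iff {R : ℝ} {C : Finset ℝ} {t b : ℝ} {m : ℕ} (i : Fin (m + 1))
    (x : Fin (m + 1) → ℝ) :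
    x ∈ lowestAt R C t b m i ↔ x i ∈ Ioo t b ∩ freePoints R C ∧
      i.removeNth x ∈ configs R (insert (x i) C) (x i) b m := by
  simp only [lowestAt, configs, freePoints, mem_ofPred_eq, mem_inter_iff,
    Fin.pairwise_iff_succAbove i, Fin.forall_iff_succAbove i, Fin.removeNth_apply,
    Finset.forall_mem_insert, mem_Ioo, ne_eq, not_true_eq_false, IsEmpty.forall_iff,
    Fin.succAbove_ne, not_false_eq_true, forall_const, true_and]
  constructor
  · rintro ⟨⟨⟨hxi, hxk⟩, ⟨hsep, hpair⟩, hCi, hCk⟩, hlow⟩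
    exact ⟨⟨hxi, hCi⟩, fun k => ⟨hlow k, (hxk k).2⟩, hpair,
      fun k => ⟨abs_sub_comm (x i) _ ▸ hsep k, hCk k⟩⟩
  · rintro ⟨⟨hxi, hCi⟩, hxk, hpair, hk⟩
    exact ⟨⟨⟨hxi, fun k => ⟨hxi.1.trans (hxk k).1, (hxk k).2⟩⟩,
      ⟨fun k => abs_sub_comm (x i) _ ▸ (hk k).1, hpair⟩, hCi, fun k => (hk k).2⟩,
      fun k => (hxk k).1⟩

lemma preimage_piFinSuccAbove_eq_lowestAt (R : ℝ) (C : Finset ℝ) (t b : ℝ) {m : ℕ}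
    (i : Fin (m + 1)) :
    MeasurableEquiv.piFinSuccAbove (fun _ => ℝ) i ⁻¹'
      ((Ioo t b ∩ freePoints R C) ×ˢ univ ∩ pinnedConfigs R C b m) = lowestAt R C t b m i := by
  ext x
  rw [mem_lowestAt_iff]
  exact and_congr_left' (and_iff_left (mem_univ _))

lemma configs_succ_eq_iUnion_lowestAt {R : ℝ} (hR : 0 ≤ R) (C : Finset ℝ) (t b : ℝ) (m : ℕ) :
    configs R C t b (m + 1) = ⋃ i, lowestAt R C t b m i := by
  ext x
  simp only [mem_iUnion, lowestAt, mem_ofPred_eq]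
  refine ⟨fun hx => ?_, fun ⟨_, hx, _⟩ => hx⟩
  obtain ⟨i, -, hi⟩ := Finset.univ.exists_min_image x Finset.univ_nonempty
  refine ⟨i, hx, fun j hj => (hi j (Finset.mem_univ j)).lt_of_ne fun hij => ?_⟩
  have hsep : R < |x i - x j| := hx.2.1 hj.symm
  rw [hij, sub_self, abs_zero] at hsep
  exact hsep.not_ge hR

lemma pairwise_disjoint_lowestAt (R : ℝ) (C : Finset ℝ) (t b : ℝ) (m : ℕ) :
    Pairwise (Disjoint on lowestAt R C t b m) := fun i j hij =>
  disjoint_left.2 fun _ hi hj => (hi.2 j hij.symm).not_gt (hj.2 i hij)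

lemma volume_configs_succ {R : ℝ} (hR : 0 ≤ R) (C : Finset ℝ) (t b : ℝ) (m : ℕ) :
    volume (configs R C t b (m + 1)) = (m + 1) * ∫⁻ s in Ioo t b,
      (freePoints R C).indicator (fun s => volume (configs R (insert s C) s b m)) s := by
  -- pairs (lowest point, remaining points); every `lowestAt R C t b m i` is a copy of `W`
  set W := (Ioo t b ∩ freePoints R C) ×ˢ univ ∩ pinnedConfigs R C b m
  have hW : MeasurableSet W :=
    ((measurableSet_Ioo.inter (isOpen_freePoints R C).measurableSet).prod .univ).inter
      (isOpen_pinnedConfigs R C b m).measurableSet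
  have hlow (i : Fin (m + 1)) :
      MeasurableSet (lowestAt R C t b m i) ∧ volume (lowestAt R C t b m i) = volume W := by
    rw [← preimage_piFinSuccAbove_eq_lowestAt]
    exact ⟨hW.preimage (MeasurableEquiv.measurable _),
      (volume_preserving_piFinSuccAbove (fun _ => ℝ) i).measure_preimage hW.nullMeasurableSet⟩
  have hslice (s : ℝ) : volume (Prod.mk s ⁻¹' W) = (Ioo t b).indicator
      ((freePoints R C).indicator fun s => volume (configs R (insert s C) s b m)) s := by
    rw [indicator_indicator, preimage_inter]
    by_cases hs : s ∈ Ioo t b ∩ freePoints R C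
    · rw [mk_preimage_prod_right hs, univ_inter, indicator_of_mem hs]
      rfl
    · rw [mk_preimage_prod_right_eq_empty hs, empty_inter, measure_empty, indicator_of_notMem hs]
  rw [configs_succ_eq_iUnion_lowestAt hR, measure_iUnion (pairwise_disjoint_lowestAt R C t b m)
    fun i => (hlow i).1, tsum_fintype, Finset.sum_congr rfl fun i _ => (hlow i).2,
    Finset.sum_const, Finset.card_univ, Fintype.card_fin, nsmul_eq_mul, Measure.volume_eq_prod,
    Measure.prod_apply hW]
  simp_rw [hslice]
  rw [lintegral_indicator measurableSet_Ioo]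
  push_cast
  rfl

noncomputable def partFunENN (R lam : ℝ) (C : Finset ℝ) (t b : ℝ) : ℝ≥0∞ :=
  ∑' n : ℕ, ENNReal.ofReal (lam ^ n / n.factorial) * volume (configs R C t b n)

lemma partFun1_eq_toReal_partFunENN {lam : ℝ} (hlam : 0 ≤ lam) (R : ℝ) (C : Finset ℝ)
    (t b : ℝ) :
    partFun1 R lam (Ioo t b) C = (partFunENN R lam C t b).toReal := by
  rw [partFunENN, ENNReal.tsum_toReal_eq fun n =>
    ENNReal.mul_ne_top ENNReal.ofReal_ne_top (volume_configs_ne_top R C t b n)]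
  refine tsum_congr fun n => ?_
  rw [setIntegral_hsInd1, ENNReal.toReal_mul, ENNReal.toReal_ofReal (by positivity)]
  rfl

lemma partFunENN_lt_top {lam : ℝ} (hlam : 0 ≤ lam) (R : ℝ) (C : Finset ℝ) {t b : ℝ}
    (htb : t ≤ b) :
    partFunENN R lam C t b < ⊤ := by
  have hterm (n : ℕ) : ENNReal.ofReal (lam ^ n / n.factorial) * volume (configs R C t b n) ≤
      ENNReal.ofReal ((lam * (b - t)) ^ n / n.factorial) := by
    calc _ ≤ ENNReal.ofReal (lam ^ n / n.factorial) * ENNReal.ofReal (b - t) ^ n := by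
          gcongr; exact volume_configs_le R C t b n
      _ = _ := by
          rw [← ENNReal.ofReal_pow (sub_nonneg.2 htb), ← ENNReal.ofReal_mul (by positivity)]
          rw [mul_pow, div_mul_eq_mul_div]
  calc partFunENN R lam C t b ≤ ∑' n : ℕ, ENNReal.ofReal ((lam * (b - t)) ^ n / n.factorial) :=
        ENNReal.tsum_le_tsum hterm
    _ = ENNReal.ofReal (∑' n : ℕ, (lam * (b - t)) ^ n / n.factorial) :=
        (ENNReal.ofReal_tsum_of_nonneg (fun n => by have := sub_nonneg.2 htb; positivity)
          (Real.summable_pow_div_factorial _)).symm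
    _ < ⊤ := ENNReal.ofReal_lt_top

lemma ofReal_pow_div_factorial_succ_mul {lam : ℝ} (hlam : 0 ≤ lam) (m : ℕ) :
    ENNReal.ofReal (lam ^ (m + 1) / (m + 1).factorial) * (m + 1) =
      ENNReal.ofReal lam * ENNReal.ofReal (lam ^ m / m.factorial) := by
  rw [← ENNReal.ofReal_mul hlam, ← Nat.cast_succ, ← ENNReal.ofReal_natCast,
    ← ENNReal.ofReal_mul (by positivity), Nat.factorial_succ]
  congr 1
  push_cast
  field_simp
  ring

noncomputable def lowestPointDensityENN (R lam : ℝ) (C : Finset ℝ) (b : ℝ) : ℝ → ℝ≥0∞ :=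
  (freePoints R C).indicator fun s => ENNReal.ofReal lam * partFunENN R lam (insert s C) s b

lemma partFunENN_eq_one_add_lintegral {R : ℝ} (hR : 0 ≤ R) {lam : ℝ} (hlam : 0 ≤ lam)
    (C : Finset ℝ) (t b : ℝ) :
    partFunENN R lam C t b = 1 + ∫⁻ s in Ioo t b, lowestPointDensityENN R lam C b s := by
  have hmeas (m : ℕ) : Measurable ((freePoints R C).indicator
      fun s => volume (configs R (insert s C) s b m)) :=
    (measurable_volume_pinnedConfigs R C b m).indicator (isOpen_freePoints R C).measurableSet
  have hterm (m : ℕ) : ENNReal.ofReal (lam ^ (m + 1) / (m + 1).factorial) *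
      volume (configs R C t b (m + 1)) = ∫⁻ s in Ioo t b, ENNReal.ofReal lam *
        (ENNReal.ofReal (lam ^ m / m.factorial) * (freePoints R C).indicator
          (fun s => volume (configs R (insert s C) s b m)) s) := by
    rw [volume_configs_succ hR, ← mul_assoc, ofReal_pow_div_factorial_succ_mul hlam, mul_assoc,
      ← lintegral_const_mul _ (hmeas m), ← lintegral_const_mul _ ((hmeas m).const_mul _)]
  rw [partFunENN, tsum_eq_zero_add' ENNReal.summable, configs_zero, pow_zero,
    Nat.factorial_zero, Nat.cast_one, div_one, ENNReal.ofReal_one, one_mul,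
    show volume (univ : Set (Fin 0 → ℝ)) = 1 by simp [volume_pi]]
  simp_rw [hterm]
  rw [← lintegral_tsum fun m => (((hmeas m).const_mul _).const_mul _).aemeasurable]
  congr 2 with s
  by_cases hs : s ∈ freePoints R C <;>
    simp [hs, lowestPointDensityENN, partFunENN, ENNReal.tsum_mul_left]

lemma measurable_lowestPointDensityENN (R lam : ℝ) (C : Finset ℝ) (b : ℝ) :
    Measurable (lowestPointDensityENN R lam C b) :=
  ((Measurable.tsum fun n =>
    (measurable_volume_pinnedConfigs R C b n).const_mul _).const_mul _).indicator
      (isOpen_freePoints R C).measurableSet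

lemma lintegral_lowestPointDensityENN_lt_top {R : ℝ} (hR : 0 ≤ R) {lam : ℝ} (hlam : 0 ≤ lam)
    (C : Finset ℝ) {t b : ℝ} (htb : t ≤ b) :
    ∫⁻ s in Ioo t b, lowestPointDensityENN R lam C b s < ⊤ :=
  le_add_self.trans_lt
    (partFunENN_eq_one_add_lintegral hR hlam C t b ▸ partFunENN_lt_top hlam R C htb)

noncomputable def lowestPointDensity (R lam : ℝ) (C : Finset ℝ) (b s : ℝ) : ℝ :=
  lam * (if ∀ c ∈ C, R < |s - c| then 1 else 0) * partFun1 R lam (Ioo s b) (insert s C)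

lemma lowestPointDensity_eq_toReal {lam : ℝ} (hlam : 0 ≤ lam) (R : ℝ) (C : Finset ℝ)
    (b s : ℝ) :
    lowestPointDensity R lam C b s = (lowestPointDensityENN R lam C b s).toReal := by
  rw [lowestPointDensity, lowestPointDensityENN, partFun1_eq_toReal_partFunENN hlam]
  by_cases hs : ∀ c ∈ C, R < |s - c|
  · rw [indicator_of_mem (s := freePoints R C) hs, if_pos hs, ENNReal.toReal_mul,
      ENNReal.toReal_ofReal hlam, mul_one]
  · rw [indicator_of_notMem (s := freePoints R C) hs, if_neg hs, mul_zero, zero_mul,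
      ENNReal.toReal_zero]

lemma lowestPointDensity_nonneg {lam : ℝ} (hlam : 0 ≤ lam) (R : ℝ) (C : Finset ℝ) (b s : ℝ) :
    0 ≤ lowestPointDensity R lam C b s :=
  lowestPointDensity_eq_toReal hlam R C b s ▸ ENNReal.toReal_nonneg

lemma partFun1_Ioo_eq_one_add_integral {R : ℝ} (hR : 0 ≤ R) {lam : ℝ} (hlam : 0 ≤ lam)
    (C : Finset ℝ) {t b : ℝ} (htb : t ≤ b) :
    partFun1 R lam (Ioo t b) C = 1 + ∫ s in Ioo t b, lowestPointDensity R lam C b s := by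
  have hfin : ∀ᵐ s ∂volume.restrict (Ioo t b), lowestPointDensityENN R lam C b s < ⊤ := by
    filter_upwards [ae_restrict_mem measurableSet_Ioo] with s hs
    refine (indicator_le_self _ _ s).trans_lt (ENNReal.mul_lt_top ENNReal.ofReal_lt_top ?_)
    exact partFunENN_lt_top hlam R _ hs.2.le
  simp_rw [partFun1_eq_toReal_partFunENN hlam, lowestPointDensity_eq_toReal hlam,
    integral_toReal (measurable_lowestPointDensityENN R lam C b).aemeasurable hfin,
    partFunENN_eq_one_add_lintegral hR hlam C t b,
    ENNReal.toReal_add ENNReal.one_ne_top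
      (lintegral_lowestPointDensityENN_lt_top hR hlam C htb).ne, ENNReal.toReal_one]

lemma one_le_partFun1_Ioo {R : ℝ} (hR : 0 ≤ R) {lam : ℝ} (hlam : 0 ≤ lam) (C : Finset ℝ)
    {t b : ℝ} (htb : t ≤ b) :
    1 ≤ partFun1 R lam (Ioo t b) C := by
  rw [partFun1_Ioo_eq_one_add_integral hR hlam C htb]
  exact le_add_of_nonneg_right (integral_nonneg (lowestPointDensity_nonneg hlam R C b))

lemma intervalIntegrable_lowestPointDensity {R : ℝ} (hR : 0 ≤ R) {lam : ℝ} (hlam : 0 ≤ lam)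
    (C : Finset ℝ) {a b : ℝ} (hab : a ≤ b) :
    IntervalIntegrable (lowestPointDensity R lam C b) volume a b := by
  rw [intervalIntegrable_iff_integrableOn_Ioc_of_le hab, IntegrableOn,
    ← Measure.restrict_congr_set Ioo_ae_eq_Ioc, funext (lowestPointDensity_eq_toReal hlam R C b)]
  exact integrable_toReal_of_lintegral_ne_top
    (measurable_lowestPointDensityENN R lam C b).aemeasurable
    (lintegral_lowestPointDensityENN_lt_top hR hlam C hab).ne

lemma ae_hasDerivAt_partFun1_Ioo {R : ℝ} (hR : 0 ≤ R) {lam : ℝ} (hlam : 0 ≤ lam)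
    (C : Finset ℝ) {a b : ℝ} (hab : a ≤ b) :
    ∀ᵐ x ∂volume.restrict (Ioo a b), HasDerivAt (fun t => partFun1 R lam (Ioo t b) C)
      (-lowestPointDensity R lam C b x) x := by
  have hQ := intervalIntegrable_lowestPointDensity hR hlam C hab
  filter_upwards [ae_restrict_of_ae hQ.ae_hasDerivAt_integral, ae_restrict_mem measurableSet_Ioo]
    with x hderiv hx
  have hrep : (fun t => partFun1 R lam (Ioo t b) C) =ᶠ[𝓝 x]
      fun t => 1 - ∫ s in b..t, lowestPointDensity R lam C b s := by
    filter_upwards [isOpen_Ioo.mem_nhds hx] with t ht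
    rw [partFun1_Ioo_eq_one_add_integral hR hlam C ht.2.le, intervalIntegral.integral_symm,
      intervalIntegral.integral_of_le ht.2.le, integral_Ioc_eq_integral_Ioo, sub_neg_eq_add]
  have hxI : x ∈ uIcc a b := Ioo_subset_Icc_self.trans Icc_subset_uIcc hx
  exact ((hderiv hxI b right_mem_uIcc).const_sub 1).congr_of_eventuallyEq hrep

end HardCore

open HardCore

/-- One-dimensional derivative of the partition function: with `z x := Z((x,b), C, λ)`,
for Lebesgue-almost every `x ∈ (a,b)`, `z` is differentiable at `x` with
`z'(x) = −λ · 1[∀ c ∈ C, |x − c| > R] · Z((x,b), C ∪ {x}, λ)`.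
Equivalently, almost everywhere, when `λ > 0`,
`−(1/λ) (d/dx) log Z((x,b), C, λ)
  = 1[∀ c ∈ C, |x − c| > R] · Z((x,b), C ∪ {x}, λ) / Z((x,b), C, λ)`. -/
theorem partFun1_deriv (R lam a b : ℝ) (hR : 0 ≤ R) (hlam : 0 ≤ lam)
    (hab : a < b) (C : Finset ℝ) :
    (∀ᵐ x ∂(volume.restrict (Set.Ioo a b)),
      HasDerivAt (fun t => partFun1 R lam (Set.Ioo t b) C)
        (-lam * (if ∀ c ∈ C, R < |x - c| then 1 else 0) *
          partFun1 R lam (Set.Ioo x b) (insert x C)) x) ∧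
    (∀ᵐ x ∂(volume.restrict (Set.Ioo a b)), 0 < lam →
      -(1 / lam) * deriv (fun t => Real.log (partFun1 R lam (Set.Ioo t b) C)) x =
        (if ∀ c ∈ C, R < |x - c| then 1 else 0) *
          partFun1 R lam (Set.Ioo x b) (insert x C) /
            partFun1 R lam (Set.Ioo x b) C) := by
  have hderiv := ae_hasDerivAt_partFun1_Ioo hR hlam C hab.le
  simp only [lowestPointDensity, ← neg_mul] at hderiv
  refine ⟨hderiv, ?_⟩
  filter_upwards [hderiv, ae_restrict_mem measurableSet_Ioo] with x hx hxab hlam_pos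
  have hpos : 0 < partFun1 R lam (Ioo x b) C :=
    zero_lt_one.trans_le (one_le_partFun1_Ioo hR hlam C hxab.2.le)
  rw [(hx.log hpos.ne').deriv]
  field_simp
end

section
/- First-point decomposition of the one-dimensional partition function: let d = 1, R ≥ 0, λ ≥ 0, a < b reals, and C ⊆ ℝ a finite set. Then Z((a,b), C, λ) = 1 + λ ∫_{(a,b)} 1[∀ c ∈ C, |y − c| > R] · Z((y,b), C ∪ {y}, λ) dy, where the integral is with respect to Lebesgue measure on (a,b). -/
/-!
Write `Z((a,b), C) = ∑ λⁿ/n! Vₙ((a,b), C)`, where `Vₙ(B, C)` is the Lebesgue measure of the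
admissible `n`-point configurations in `Bⁿ`. The admissible set is invariant under permuting
coordinates and almost every configuration has a unique leftmost point, so `V_{n+1}((a,b), C)` is
`n + 1` times the measure of the configurations whose first coordinate is the leftmost point.
Fixing that point at `y`, the others form an admissible configuration in `(y,b)ⁿ` for the
boundary condition `C ∪ {y}`, so by Fubini
`V_{n+1}((a,b), C) = (n + 1) ∫_{(a,b)} 1[y admissible] Vₙ((y,b), C ∪ {y}) dy`.
Multiplying by `λⁿ⁺¹/(n+1)!` and summing gives the identity; sum and integral may be exchanged
because `Vₙ((a,b), C) ≤ (b - a)ⁿ`.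
-/

open MeasureTheory
open scoped Classical

open Set
open scoped ENNReal Nat

section Slicing

variable {α : Type*} [MeasurableSpace α] (μ : Measure α) [SigmaFinite μ] {n : ℕ}

lemma prodMk_preimage_piFinSuccAbove_zero_symm (S : Set (Fin (n + 1) → α)) (y : α) :
    Prod.mk y ⁻¹' ((MeasurableEquiv.piFinSuccAbove (fun _ => α) 0).symm ⁻¹' S) =
      {z | Fin.cons y z ∈ S} := by
  ext z
  simp only [MeasurableEquiv.piFinSuccAbove_symm_apply, Fin.insertNthEquiv_zero, mem_preimage,
    mem_ofPred_eq]
  rfl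

lemma measurable_measure_pi_cons_preimage {S : Set (Fin (n + 1) → α)} (hS : MeasurableSet S) :
    Measurable fun y => Measure.pi (fun _ : Fin n => μ) {z | Fin.cons y z ∈ S} := by
  simp_rw [← prodMk_preimage_piFinSuccAbove_zero_symm]
  exact measurable_measure_prodMk_left
    ((MeasurableEquiv.piFinSuccAbove (fun _ => α) 0).symm.measurable hS)

lemma measure_pi_eq_lintegral_cons_preimage {S : Set (Fin (n + 1) → α)} (hS : MeasurableSet S) :
    Measure.pi (fun _ => μ) S =
      ∫⁻ y, Measure.pi (fun _ : Fin n => μ) {z | Fin.cons y z ∈ S} ∂μ := by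
  have he := (measurePreserving_piFinSuccAbove (fun _ : Fin (n + 1) => μ) 0).symm
  rw [← he.measure_preimage hS.nullMeasurableSet, Measure.prod_apply (he.measurable hS)]
  simp_rw [prodMk_preimage_piFinSuccAbove_zero_symm]

end Slicing

lemma volume_setOf_apply_eq_apply_eq_zero {ι : Type*} [Fintype ι] {i j : ι} (hij : i ≠ j) :
    volume {x : ι → ℝ | x i = x j} = 0 := by
  let H : Submodule ℝ (ι → ℝ) :=
    LinearMap.ker ((LinearMap.proj i : (ι → ℝ) →ₗ[ℝ] ℝ) - LinearMap.proj j)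
  have hH : H ≠ ⊤ := fun h => by
    have : Pi.single i (1 : ℝ) ∈ H := h ▸ Submodule.mem_top
    simp [H, hij] at this
  convert Measure.addHaar_submodule volume H hH using 2
  ext x
  simp [H, sub_eq_zero]

lemma measurePreserving_comp_perm {ι : Type*} [Fintype ι] [DecidableEq ι] (σ : Equiv.Perm ι) :
    MeasurePreserving (fun x : ι → ℝ => x ∘ σ) := by
  have h : ⇑(MeasurableEquiv.piCongrLeft (fun _ : ι => ℝ) σ.symm) = fun x => x ∘ σ := by
    ext x i
    simpa using MeasurableEquiv.piCongrLeft_apply_apply (β := fun _ : ι => ℝ) σ.symm x (σ i)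
  exact h ▸ volume_measurePreserving_piCongrLeft (fun _ : ι => ℝ) σ.symm

def strictMinSet {ι : Type*} (i : ι) : Set (ι → ℝ) := {x | ∀ j ≠ i, x i < x j}

section StrictMin

variable {ι : Type*}

lemma measurableSet_strictMinSet [Countable ι] (i : ι) : MeasurableSet (strictMinSet i) := by
  simp only [strictMinSet, ofPred_forall]
  exact .iInter fun j => .iInter fun _ => measurableSet_lt (measurable_pi_apply i)
    (measurable_pi_apply j)

lemma pairwise_disjoint_strictMinSet : Pairwise (Function.onFun Disjoint (strictMinSet (ι := ι))) :=
  fun k l hkl => disjoint_left.2 fun _ hk hl => (hk l hkl.symm).not_gt (hl k hkl)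

lemma ae_mem_iUnion_strictMinSet [Fintype ι] [Nonempty ι] :
    ∀ᵐ x : ι → ℝ, x ∈ ⋃ i, strictMinSet i := by
  have hinj : ∀ᵐ x : ι → ℝ, ∀ i j, i ≠ j → x i ≠ x j := by
    simp only [ae_all_iff]
    intro i j hij
    exact measure_mono_null (fun x hx => by simpa using hx)
      (volume_setOf_apply_eq_apply_eq_zero hij)
  filter_upwards [hinj] with x hx
  obtain ⟨k, -, hk⟩ := Finset.exists_min_image Finset.univ x Finset.univ_nonempty
  exact mem_iUnion.2 ⟨k, fun j hj => (hk j (Finset.mem_univ j)).lt_of_ne (hx k j hj.symm)⟩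

lemma comp_swap_mem_strictMinSet_iff [DecidableEq ι] {i k : ι} {x : ι → ℝ} :
    x ∘ Equiv.swap i k ∈ strictMinSet i ↔ x ∈ strictMinSet k := by
  simp only [strictMinSet, mem_ofPred_eq, Function.comp_apply, Equiv.swap_apply_left]
  exact (Equiv.swap i k).forall_congr fun j => by simp [Equiv.swap_apply_eq_iff]

lemma volume_eq_card_mul_volume_inter_strictMinSet [Fintype ι] [DecidableEq ι]
    {A : Set (ι → ℝ)} (hA : MeasurableSet A) (hA_perm : ∀ (σ : Equiv.Perm ι) x, x ∘ σ ∈ A ↔ x ∈ A)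
    (i : ι) : volume A = Fintype.card ι * volume (A ∩ strictMinSet i) := by
  have : Nonempty ι := ⟨i⟩
  have hcover : volume (⋃ k, strictMinSet (ι := ι) k)ᶜ = 0 :=
    ae_iff.1 ae_mem_iUnion_strictMinSet
  have hperm : ∀ k, volume (A ∩ strictMinSet k) = volume (A ∩ strictMinSet i) := fun k => by
    have hσ : (· ∘ Equiv.swap i k) ⁻¹' (A ∩ strictMinSet i) = A ∩ strictMinSet k := by
      ext x
      exact and_congr (hA_perm _ x) comp_swap_mem_strictMinSet_iff
    rw [← hσ, (measurePreserving_comp_perm _).measure_preimage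
      (hA.inter (measurableSet_strictMinSet i)).nullMeasurableSet]
  calc volume A = volume (A ∩ ⋃ k, strictMinSet k) := (measure_inter_conull hcover).symm
    _ = ∑ k, volume (A ∩ strictMinSet k) := by
      rw [inter_iUnion, measure_iUnion (fun k l hkl => (pairwise_disjoint_strictMinSet hkl).mono
        inter_subset_right inter_subset_right) fun k => hA.inter (measurableSet_strictMinSet k),
        tsum_fintype]
    _ = Fintype.card ι * volume (A ∩ strictMinSet i) := by
      simp [Finset.sum_congr rfl fun k _ => hperm k]

end StrictMin

lemma tsum_pow_div_factorial_mul_eq_one_add_mul_integral {α : Type*} [MeasurableSpace α]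
    {μ : Measure α} {v : ℕ → ℝ} {f : ℕ → α → ℝ} {L : ℝ} (lam : ℝ) (hv_zero : v 0 = 1)
    (hv_succ : ∀ n, v (n + 1) = (n + 1) * ∫ x, f n x ∂μ) (hf : ∀ n, Integrable (f n) μ)
    (hf_nonneg : ∀ n x, 0 ≤ f n x) (hv_le : ∀ n, |v n| ≤ L ^ n) :
    ∑' n, lam ^ n / n ! * v n = 1 + lam * ∫ x, ∑' n, lam ^ n / n ! * f n x ∂μ := by
  have hsum : Summable fun n => lam ^ n / n ! * v n := by
    refine (Real.summable_pow_div_factorial (|lam| * L)).of_norm_bounded fun n => ?_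
    rw [norm_mul, norm_div, norm_pow, Real.norm_natCast, Real.norm_eq_abs, Real.norm_eq_abs,
      mul_pow, mul_div_right_comm]
    gcongr
    exact hv_le n
  have hint_le : ∀ n, ∫ x, f n x ∂μ ≤ L ^ (n + 1) := fun n => by
    have h0 : 0 ≤ ∫ x, f n x ∂μ := integral_nonneg (hf_nonneg n)
    calc ∫ x, f n x ∂μ ≤ (n + 1) * ∫ x, f n x ∂μ := le_mul_of_one_le_left h0 (by simp)
      _ = v (n + 1) := (hv_succ n).symm
      _ ≤ L ^ (n + 1) := (le_abs_self _).trans (hv_le _)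
  have hsum_int : Summable fun n => ∫ x, ‖lam ^ n / n ! * f n x‖ ∂μ := by
    refine Summable.of_nonneg_of_le (fun n => integral_nonneg fun x => norm_nonneg _)
      (fun n => ?_) ((Real.summable_pow_div_factorial (|lam| * L)).mul_left L)
    simp_rw [norm_mul, Real.norm_of_nonneg (hf_nonneg n _)]
    rw [integral_const_mul, norm_div, norm_pow, Real.norm_natCast, Real.norm_eq_abs]
    calc |lam| ^ n / n ! * ∫ x, f n x ∂μ ≤ |lam| ^ n / n ! * L ^ (n + 1) := by
          gcongr; exact hint_le n
      _ = L * ((|lam| * L) ^ n / n !) := by ring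
  rw [hsum.tsum_eq_zero_add, ← integral_tsum_of_summable_integral_norm
    (fun n => (hf n).const_mul _) hsum_int, ← tsum_mul_left]
  simp only [hv_zero, hv_succ, integral_const_mul]
  congr 1
  · simp
  · refine tsum_congr fun n => ?_
    rw [Nat.factorial_succ]
    push_cast
    field_simp
    ring

def hardCoreSet (R : ℝ) (C : Finset ℝ) (n : ℕ) : Set (Fin n → ℝ) :=
  {x | (∀ i j, i < j → R < |x i - x j|) ∧ ∀ i, ∀ c ∈ C, R < |x i - c|}

noncomputable def hardCoreVolume (R : ℝ) (C : Finset ℝ) (n : ℕ) (B : Set ℝ) : ℝ≥0∞ :=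
  volume (hardCoreSet R C n ∩ univ.pi fun _ => B)

noncomputable def firstPointDensity (R : ℝ) (C : Finset ℝ) (n : ℕ) (b : ℝ) : ℝ → ℝ≥0∞ :=
  {y | ∀ c ∈ C, R < |y - c|}.indicator fun y => hardCoreVolume R (insert y C) n (Ioo y b)

section HardCore

variable {R : ℝ} {C : Finset ℝ} {n : ℕ}

lemma hsInd1_eq_indicator (x : Fin n → ℝ) : hsInd1 R C x = (hardCoreSet R C n).indicator 1 x := by
  simp [hsInd1, indicator_apply, hardCoreSet]

lemma measurableSet_hardCoreSet : MeasurableSet (hardCoreSet R C n) := by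
  simp only [hardCoreSet, ofPred_and, ofPred_forall]
  exact .inter (.iInter fun i => .iInter fun j => .iInter fun _ =>
      measurableSet_lt measurable_const (by fun_prop))
    (.iInter fun i => C.measurableSet_biInter fun c _ =>
      measurableSet_lt measurable_const (by fun_prop))

lemma mem_hardCoreSet_iff_pairwise {x : Fin n → ℝ} :
    x ∈ hardCoreSet R C n ↔
      Pairwise (fun i j => R < |x i - x j|) ∧ ∀ i, ∀ c ∈ C, R < |x i - c| := by
  refine and_congr_left fun _ => ⟨fun h i j hij => ?_, fun h i j hij => h hij.ne⟩
  rcases hij.lt_or_gt with hij | hij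
  · exact h i j hij
  · exact abs_sub_comm (x i) (x j) ▸ h j i hij

lemma comp_perm_mem_hardCoreSet_iff (σ : Equiv.Perm (Fin n)) {x : Fin n → ℝ} :
    x ∘ σ ∈ hardCoreSet R C n ↔ x ∈ hardCoreSet R C n := by
  simp only [mem_hardCoreSet_iff_pairwise, Function.comp_apply,
    σ.forall_congr_right (q := fun i => ∀ c ∈ C, R < |x i - c|)]
  exact and_congr_left fun _ => EquivLike.pairwise_comp_iff σ fun i j => R < |x i - x j|

lemma cons_mem_hardCoreSet_iff {y : ℝ} {z : Fin n → ℝ} :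
    Fin.cons y z ∈ hardCoreSet R C (n + 1) ↔
      (∀ c ∈ C, R < |y - c|) ∧ z ∈ hardCoreSet R (insert y C) n := by
  simp only [hardCoreSet, Fin.forall_fin_succ, not_lt_zero, IsEmpty.forall_iff, true_and,
    Fin.succ_pos, abs_sub_comm, forall_const, Fin.succ_lt_succ_iff, mem_ofPred_eq, Fin.cons_succ,
    Fin.cons_zero, Finset.mem_insert, forall_eq_or_imp, forall_and]
  tauto

end HardCore

section HardCoreVolume

variable {R : ℝ} {C : Finset ℝ} {n : ℕ}

lemma integral_hsInd1 (B : Set ℝ) :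
    ∫ x in univ.pi (fun _ : Fin n => B), hsInd1 R C x = (hardCoreVolume R C n B).toReal := by
  simp_rw [hsInd1_eq_indicator]
  rw [integral_indicator_one measurableSet_hardCoreSet, measureReal_def,
    Measure.restrict_apply measurableSet_hardCoreSet, hardCoreVolume]

lemma partFun1_eq_tsum (lam : ℝ) (B : Set ℝ) :
    partFun1 R lam B C = ∑' n, lam ^ n / n ! * (hardCoreVolume R C n B).toReal := by
  simp only [partFun1, integral_hsInd1]

lemma hardCoreVolume_zero (B : Set ℝ) : hardCoreVolume R C 0 B = 1 := by
  have : hardCoreSet R C 0 ∩ univ.pi (fun _ => B) = univ := by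
    ext x
    simp [hardCoreSet]
  simp [hardCoreVolume, this, volume_pi]

lemma hardCoreVolume_le (B : Set ℝ) : hardCoreVolume R C n B ≤ volume B ^ n :=
  calc hardCoreVolume R C n B ≤ volume (univ.pi fun _ : Fin n => B) :=
        measure_mono inter_subset_right
    _ = volume B ^ n := by simp [volume_pi_pi]

lemma cons_mem_firstPoint_iff {a b y : ℝ} {z : Fin n → ℝ} :
    Fin.cons y z ∈ hardCoreSet R C (n + 1) ∩ univ.pi (fun _ => Ioo a b) ∩
        strictMinSet 0 ↔
      y ∈ Ioo a b ∩ {y | ∀ c ∈ C, R < |y - c|} ∧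
        z ∈ hardCoreSet R (insert y C) n ∩ univ.pi (fun _ => Ioo y b) := by
  simp only [mem_inter_iff, cons_mem_hardCoreSet_iff, mem_univ_pi, Fin.forall_fin_succ,
    strictMinSet, mem_ofPred_eq, Fin.cons_zero, Fin.cons_succ, ne_eq, not_true, Fin.succ_ne_zero,
    not_false_eq_true, mem_Ioo, false_implies, true_implies, true_and, forall_and]
  grind

lemma volume_cons_preimage_firstPoint (a b : ℝ) :
    (fun y => volume {z : Fin n → ℝ | Fin.cons y z ∈ hardCoreSet R C (n + 1) ∩
        univ.pi (fun _ => Ioo a b) ∩ strictMinSet 0}) =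
      (Ioo a b).indicator (firstPointDensity R C n b) := by
  ext y
  simp only [cons_mem_firstPoint_iff, firstPointDensity, indicator_indicator]
  by_cases hy : y ∈ Ioo a b ∩ {y | ∀ c ∈ C, R < |y - c|}
  · simp only [indicator_of_mem hy, hy, true_and, ofPred_mem_eq, hardCoreVolume]
  · simp [hy]

lemma hardCoreVolume_succ (a b : ℝ) :
    hardCoreVolume R C (n + 1) (Ioo a b) =
      (n + 1) * ∫⁻ y in Ioo a b, firstPointDensity R C n b y := by
  have hA : MeasurableSet (hardCoreSet R C (n + 1) ∩ univ.pi fun _ => Ioo a b) :=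
    measurableSet_hardCoreSet.inter (.univ_pi fun _ => measurableSet_Ioo)
  have hA_perm : ∀ (σ : Equiv.Perm (Fin (n + 1))) x, x ∘ σ ∈ hardCoreSet R C (n + 1) ∩
      univ.pi (fun _ => Ioo a b) ↔ x ∈ hardCoreSet R C (n + 1) ∩ univ.pi fun _ => Ioo a b :=
    fun σ x => by
      simp only [mem_inter_iff, comp_perm_mem_hardCoreSet_iff, mem_univ_pi, Function.comp_apply,
        σ.forall_congr_right (q := fun i => x i ∈ Ioo a b)]
  rw [hardCoreVolume, volume_eq_card_mul_volume_inter_strictMinSet hA hA_perm 0,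
    Fintype.card_fin, volume_pi, measure_pi_eq_lintegral_cons_preimage _
      (hA.inter (measurableSet_strictMinSet 0)), ← volume_pi, volume_cons_preimage_firstPoint,
    lintegral_indicator measurableSet_Ioo]
  norm_cast

lemma aemeasurable_firstPointDensity (a b : ℝ) :
    AEMeasurable (firstPointDensity R C n b) (volume.restrict (Ioo a b)) := by
  rw [← aemeasurable_indicator_iff measurableSet_Ioo, ← volume_cons_preimage_firstPoint]
  exact (measurable_measure_pi_cons_preimage volume ((measurableSet_hardCoreSet.inter
    (.univ_pi fun _ => measurableSet_Ioo)).inter (measurableSet_strictMinSet 0))).aemeasurable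

lemma lintegral_firstPointDensity_ne_top (a b : ℝ) :
    ∫⁻ y in Ioo a b, firstPointDensity R C n b y ≠ ∞ := by
  have hfin : hardCoreVolume R C (n + 1) (Ioo a b) ≠ ∞ :=
    ne_top_of_le_ne_top (by simp) (hardCoreVolume_le _)
  rw [hardCoreVolume_succ] at hfin
  exact fun h => hfin (ENNReal.mul_eq_top.2 (Or.inl ⟨by positivity, h⟩))

lemma integrable_toReal_firstPointDensity (a b : ℝ) :
    Integrable (fun y => (firstPointDensity R C n b y).toReal) (volume.restrict (Ioo a b)) :=
  integrable_toReal_of_lintegral_ne_top (aemeasurable_firstPointDensity a b)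
    (lintegral_firstPointDensity_ne_top a b)

lemma toReal_hardCoreVolume_succ (a b : ℝ) :
    (hardCoreVolume R C (n + 1) (Ioo a b)).toReal =
      (n + 1) * ∫ y in Ioo a b, (firstPointDensity R C n b y).toReal := by
  rw [integral_toReal (aemeasurable_firstPointDensity a b) (ae_lt_top'
    (aemeasurable_firstPointDensity a b) (lintegral_firstPointDensity_ne_top a b)),
    hardCoreVolume_succ, ENNReal.toReal_mul]
  norm_cast

lemma toReal_firstPointDensity (b y : ℝ) :
    (firstPointDensity R C n b y).toReal =
      (if ∀ c ∈ C, R < |y - c| then 1 else 0) *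
        (hardCoreVolume R (insert y C) n (Ioo y b)).toReal := by
  simp only [firstPointDensity, indicator_apply, mem_ofPred_eq]
  split_ifs <;> simp

end HardCoreVolume

theorem partFun1_first_point_general (R lam a b : ℝ) (C : Finset ℝ) :
    partFun1 R lam (Set.Ioo a b) C =
      1 + lam * ∫ y in Set.Ioo a b,
        (if ∀ c ∈ C, R < |y - c| then 1 else 0) *
          partFun1 R lam (Set.Ioo y b) (insert y C) := by
  have hv_le : ∀ n, |(hardCoreVolume R C n (Ioo a b)).toReal| ≤ volume.real (Ioo a b) ^ n :=
    fun n => by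
      rw [abs_of_nonneg ENNReal.toReal_nonneg, measureReal_def, ← ENNReal.toReal_pow]
      exact ENNReal.toReal_mono (by simp) (hardCoreVolume_le _)
  simp_rw [partFun1_eq_tsum]
  rw [tsum_pow_div_factorial_mul_eq_one_add_mul_integral lam (by simp [hardCoreVolume_zero])
    (fun n => toReal_hardCoreVolume_succ a b) (fun n => integrable_toReal_firstPointDensity a b)
    (fun n y => ENNReal.toReal_nonneg) hv_le]
  simp_rw [toReal_firstPointDensity, mul_left_comm _ (ite _ _ _), tsum_mul_left]

/-- First-point decomposition of the one-dimensional partition function: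
`Z((a,b), C, λ) = 1 + λ ∫_{(a,b)} 1[∀ c ∈ C, |y − c| > R] · Z((y,b), C ∪ {y}, λ) dy`. -/
theorem partFun1_first_point (R lam a b : ℝ) (hR : 0 ≤ R) (hlam : 0 ≤ lam)
    (hab : a < b) (C : Finset ℝ) :
    partFun1 R lam (Set.Ioo a b) C =
      1 + lam * ∫ y in Set.Ioo a b,
        (if ∀ c ∈ C, R < |y - c| then 1 else 0) *
          partFun1 R lam (Set.Ioo y b) (insert y C) :=
  partFun1_first_point_general R lam a b C
end
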